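/- arXiv:1012.2844 — 8 statements merged into one kernel-verified Lean document; each statement's English description precedes it below -/
import Mathlib

section
/- The bracket [x,y]_{6,k} := xy − yx − xyq + yxq + kxqy − kyqx is bilinear, alternating ([x,x]_{6,k} = 0), and satisfies the Jacobi identity on (A,q); hence (A,q) becomes a Lie algebra under [·,·]_{6,k}. -/
/-- On the invariant algebra `(A,q) = {x : q*x*q = q*x}`, the 6-th square bracket
`[x,y]_{6,k} = xy - yx - xyq + yxq + k•xqy - k•yqx` is bilinear, alternating and
satisfies the Jacobi identity; hence `(A,q)` becomes a Lie algebra under it. -/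
theorem sixth_bracket_lie
    (K : Type*) [Field K] (A : Type*) [Ring A] [Algebra K A]
    (q : A) (hq : q * q = q) (k : K) :
    let S : Set A := {x | q * x * q = q * x}
    let br : A → A → A := fun x y =>
      x * y - y * x - x * y * q + y * x * q + k • (x * q * y) - k • (y * q * x)
    -- bilinearity
    (∀ x y z : A, br (x + y) z = br x z + br y z) ∧
    (∀ x y z : A, br x (y + z) = br x y + br x z) ∧
    (∀ (c : K) (x y : A), br (c • x) y = c • br x y) ∧
    (∀ (c : K) (x y : A), br x (c • y) = c • br x y) ∧
    -- alternating on (A,q)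
    (∀ x ∈ S, br x x = 0) ∧
    -- Jacobi identity on (A,q)
    (∀ x ∈ S, ∀ y ∈ S, ∀ z ∈ S,
      br (br x y) z + br (br y z) x + br (br z x) y = 0) := by
  intro S br
  have key : ∀ v : A, q * v * q = q * v → (∀ a, q * (v * (q * a)) = q * (v * a)) ∧
      (q * (v * q) = q * v) := by
    intro v hv
    constructor
    · intro a
      rw [← mul_assoc, ← mul_assoc, hv, mul_assoc]
    · rw [← mul_assoc, hv]
  have Q1 : ∀ a, q * (q * a) = q * a := by
    intro a; rw [← mul_assoc, hq]
  refine ⟨?_, ?_, ?_, ?_, ?_, ?_⟩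
  · intro x y z; simp only [br]; simp only [smul_add, add_mul, mul_add]; noncomm_ring
  · intro x y z; simp only [br]; simp only [smul_add, add_mul, mul_add]; noncomm_ring
  · intro c x y; simp only [br]
    simp only [smul_mul_assoc, mul_smul_comm, smul_sub, smul_add, smul_smul, mul_comm]
  · intro c x y; simp only [br]
    simp only [smul_mul_assoc, mul_smul_comm, smul_sub, smul_add, smul_smul, mul_comm]
  · intro x _; simp only [br]; abel
  · intro x hx y hy z hz
    obtain ⟨Lx1, Lx2⟩ := key x hx
    obtain ⟨Ly1, Ly2⟩ := key y hy
    obtain ⟨Lz1, Lz2⟩ := key z hz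
    simp only [br, smul_sub, smul_add, sub_mul, add_mul, mul_sub, mul_add,
      smul_mul_assoc, mul_smul_comm, smul_smul, mul_assoc, Q1, hq,
      Lx1, Lx2, Ly1, Ly2, Lz1, Lz2]
    module
end

section
/- The bracket ⟨x,y⟩_{4,k} := xy − yx + yqx − xyq + kxqy − kqyx satisfies the right Leibniz identity ⟨⟨x,y⟩,z⟩ = ⟨x,⟨y,z⟩⟩ + ⟨⟨x,z⟩,y⟩ for all x, y, z in (A,q); hence (A,q) becomes a right Leibniz algebra under ⟨·,·⟩_{4,k}. -/
/-- On the invariant algebra `(A,q) = {x : q*x*q = q*x}`, the 4-th angle bracket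
`⟨x,y⟩_{4,k} = xy - yx + yqx - xyq + k•xqy - k•qyx` satisfies the right Leibniz identity
`⟨⟨x,y⟩,z⟩ = ⟨x,⟨y,z⟩⟩ + ⟨⟨x,z⟩,y⟩`; hence `(A,q)` is a right Leibniz algebra under it. -/
theorem fourth_bracket_leibniz
    (K : Type*) [Field K] (A : Type*) [Ring A] [Algebra K A]
    (q : A) (hq : q * q = q) (k : K) :
    let S : Set A := {x | q * x * q = q * x}
    let br : A → A → A := fun x y =>
      x * y - y * x + y * q * x - x * y * q + k • (x * q * y) - k • (q * y * x)
    ∀ x ∈ S, ∀ y ∈ S, ∀ z ∈ S,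
      br (br x y) z = br x (br y z) + br (br x z) y := by
  intro S br x hx y hy z hz
  simp only [S, Set.mem_setOf_eq] at hx hy hz
  have hq' : ∀ t : A, q * (q * t) = q * t := fun t => by
    rw [← mul_assoc, hq]
  have hx1 : q * (x * q) = q * x := by rw [← mul_assoc, hx]
  have hx2 : ∀ t : A, q * (x * (q * t)) = q * (x * t) := fun t => by
    rw [← mul_assoc, ← mul_assoc, hx, mul_assoc]
  have hy1 : q * (y * q) = q * y := by rw [← mul_assoc, hy]
  have hy2 : ∀ t : A, q * (y * (q * t)) = q * (y * t) := fun t => by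
    rw [← mul_assoc, ← mul_assoc, hy, mul_assoc]
  have hz1 : q * (z * q) = q * z := by rw [← mul_assoc, hz]
  have hz2 : ∀ t : A, q * (z * (q * t)) = q * (z * t) := fun t => by
    rw [← mul_assoc, ← mul_assoc, hz, mul_assoc]
  simp only [br, sub_eq_add_neg, mul_add, add_mul, mul_neg, neg_mul, neg_add, neg_neg,
    smul_mul_assoc, mul_smul_comm, smul_add, smul_neg, smul_smul, mul_assoc,
    hq, hq', hx1, hx2, hy1, hy2, hz1, hz2]
  abel
end

section
/- The invariant algebra (A,q) is closed under the bracket [x,y]_{6,k} = xy − yx − xyq + yxq + kxqy − kyqx; that is, if qxq = qx and qyq = qy then q[x,y]_{6,k}q = q[x,y]_{6,k}. -/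
/-- The invariant algebra `(A,q)` is closed under the 6-th square bracket
`[x,y]_{6,k} = xy - yx - xyq + yxq + k•xqy - k•yqx`. -/
theorem invariant_closed_under_sixth_bracket
    (K : Type*) [Field K] (A : Type*) [Ring A] [Algebra K A]
    (q : A) (hq : q * q = q) (k : K)
    (x y : A) (hx : q * x * q = q * x) (hy : q * y * q = q * y) :
    q * (x * y - y * x - x * y * q + y * x * q + k • (x * q * y) - k • (y * q * x)) * q
      = q * (x * y - y * x - x * y * q + y * x * q + k • (x * q * y) - k • (y * q * x)) := by
  have hxy : q * (x * y) * q = q * (x * y) := by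
    have h1 : q * (x * y) = q * x * (q * y) := by
      calc q * (x * y) = q * x * y := by rw [mul_assoc]
        _ = q * x * q * y := by rw [hx]
        _ = q * x * (q * y) := by rw [mul_assoc]
    rw [h1, ← hy]
    simp only [mul_assoc, hq]
  have hyx : q * (y * x) * q = q * (y * x) := by
    have h1 : q * (y * x) = q * y * (q * x) := by
      calc q * (y * x) = q * y * x := by rw [mul_assoc]
        _ = q * y * q * x := by rw [hy]
        _ = q * y * (q * x) := by rw [mul_assoc]
    rw [h1, ← hx]
    simp only [mul_assoc, hq]
  simp only [mul_sub, mul_add, sub_mul, add_mul, mul_smul_comm, smul_mul_assoc]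
  have e1 : q * (x * y) * q = q * (x * y) := hxy
  have e2 : q * (y * x) * q = q * (y * x) := hyx
  have e3 : q * (x * y * q) * q = q * (x * y * q) := by
    simp only [← mul_assoc]
    rw [mul_assoc (q * x * y) q q, hq]
  have e4 : q * (y * x * q) * q = q * (y * x * q) := by
    simp only [← mul_assoc]
    rw [mul_assoc (q * y * x) q q, hq]
  have e5 : q * (x * q * y) * q = q * (x * q * y) := by
    have : q * (x * q * y) = q * (x * y) := by
      rw [show q * (x * q * y) = q * x * q * y by noncomm_ring, hx, mul_assoc]
    rw [this, hxy]
  have e6 : q * (y * q * x) * q = q * (y * q * x) := by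
    have : q * (y * q * x) = q * (y * x) := by
      rw [show q * (y * q * x) = q * y * q * x by noncomm_ring, hy, mul_assoc]
    rw [this, hyx]
  simp only [mul_assoc] at *
  simp only [e1, e2, e3, e4, e5, e6]
end

section
/- The invariant algebra (A,q) is closed under the bracket ⟨x,y⟩_{4,k} = xy − yx + yqx − xyq + kxqy − kqyx; that is, if qxq = qx and qyq = qy then q⟨x,y⟩_{4,k}q = q⟨x,y⟩_{4,k}. -/
/-- The invariant algebra `(A,q)` is closed under the 4-th angle bracket
`⟨x,y⟩_{4,k} = xy - yx + yqx - xyq + k•xqy - k•qyx`. -/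
theorem invariant_closed_under_fourth_bracket
    (K : Type*) [Field K] (A : Type*) [Ring A] [Algebra K A]
    (q : A) (hq : q * q = q) (k : K)
    (x y : A) (hx : q * x * q = q * x) (hy : q * y * q = q * y) :
    q * (x * y - y * x + y * q * x - x * y * q + k • (x * q * y) - k • (q * y * x)) * q
      = q * (x * y - y * x + y * q * x - x * y * q + k • (x * q * y) - k • (q * y * x)) := by
  have key : ∀ a b : A, q*a*q = q*a → q*b*q = q*b → q*(a*b)*q = q*(a*b) := by
    intro a b ha hb
    have h1 : q*a*q*b = q*a*b := by rw [ha]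
    have h2 : q*a*q*b*q = q*a*b*q := by rw [ha]
    calc q*(a*b)*q = q*a*b*q := by rw [← mul_assoc]
      _ = q*a*q*b*q := by rw [h2]
      _ = q*a*(q*b*q) := by rw [mul_assoc (q*a) q b, mul_assoc (q*a) (q*b) q]
      _ = q*a*(q*b) := by rw [hb]
      _ = q*a*q*b := by rw [← mul_assoc]
      _ = q*a*b := h1
      _ = q*(a*b) := by rw [mul_assoc]
  have hqm : q*q*q = q*q := by simp [hq]
  have hxq : q*(x*q)*q = q*(x*q) := by simp only [← mul_assoc]; simp only [hx]
  have hyq : q*(y*q)*q = q*(y*q) := by simp only [← mul_assoc]; simp only [hy]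
  have hqy : q*(q*y)*q = q*(q*y) := by simp only [← mul_assoc, hq]; simp only [hy]
  have h1 := key x y hx hy
  have h2 := key y x hy hx
  have h3 := key (y*q) x hyq hx
  have h4 := key (x*y) q h1 hqm
  have h5 := key (x*q) y hxq hy
  have h6 := key (q*y) x hqy hx
  simp only [mul_sub, mul_add, sub_mul, add_mul, mul_smul_comm, smul_mul_assoc]
  rw [h1, h2, h3, h4, h5, h6]
end

section
/- The pair ((Â, q̂), î) with î(x_j) := x_j + I satisfies the universal property of the free invariant algebra on X: for every associative algebra A with idempotent q whose invariant algebra is (A,q), and every map θ : X → (A,q), there is a unique invariant homomorphism θ̂ : (Â,q̂) → (A,q) with θ̂ ∘ î = θ. -/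
noncomputable section

/-- The free `K`-vector space on `X ⊕ {q̃}`. -/
abbrev FreeInvModule (K : Type*) [Field K] (X : Type*) : Type _ := (X ⊕ Unit) →₀ K

/-- The generator `q̃` inside the tensor algebra `T(V)`. -/
def qTilde (K : Type*) [Field K] (X : Type*) : TensorAlgebra K (FreeInvModule K X) :=
  TensorAlgebra.ι K (Finsupp.single (Sum.inr ()) 1)

/-- The relations generating the ideal `I`: `q̃⊗q̃ = q̃` and `q̃⊗a⊗q̃ = q̃⊗a` for all `a`. -/
inductive InvRel (K : Type*) [Field K] (X : Type*) :
    TensorAlgebra K (FreeInvModule K X) → TensorAlgebra K (FreeInvModule K X) → Prop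
  | idem : InvRel K X (qTilde K X * qTilde K X) (qTilde K X)
  | inv (a : TensorAlgebra K (FreeInvModule K X)) :
      InvRel K X (qTilde K X * a * qTilde K X) (qTilde K X * a)

/-- The free invariant algebra `Â = T(V)/I`. -/
abbrev FreeInvAlg (K : Type*) [Field K] (X : Type*) : Type _ := RingQuot (InvRel K X)

/-- `q̂ = q̃ + I`. -/
def qHat (K : Type*) [Field K] (X : Type*) : FreeInvAlg K X :=
  RingQuot.mkAlgHom K (InvRel K X) (qTilde K X)

/-- The canonical map `î : X → Â`, `î(x_j) = x_j + I`. -/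
def xHat (K : Type*) [Field K] (X : Type*) (j : X) : FreeInvAlg K X :=
  RingQuot.mkAlgHom K (InvRel K X) (TensorAlgebra.ι K (Finsupp.single (Sum.inl j) 1))

/-- `((Â,q̂), î)` satisfies the universal property of the free invariant algebra on `X`:
for every associative algebra `A` with idempotent `q` and every map `θ : X → (A,q)` there is a
unique invariant homomorphism `θ̂ : (Â,q̂) → (A,q)` with `θ̂ ∘ î = θ`. -/
theorem freeInvAlg_universal_property (K : Type*) [Field K] (X : Type*)
    (A : Type*) [Ring A] [Algebra K A] (q : A) (hq : q * q = q)
    (θ : X → A) (hθ : ∀ j : X, q * θ j * q = q * θ j) :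
    ∃! θh : FreeInvAlg K X →ₐ[K] A,
      (θh (qHat K X) = q) ∧
      (∀ j : X, θh (xHat K X j) = θ j) ∧
      (∀ a : FreeInvAlg K X, q * θh a * q = q * θh a) := by
  classical
  -- the invariant subalgebra of (A, q)
  set S : Subalgebra K A :=
    { carrier := {a : A | q * a * q = q * a}
      mul_mem' := by
        intro x y hx hy
        simp only [Set.mem_setOf_eq] at hx hy ⊢
        calc q * (x * y) * q = (q * x) * (y * q) := by simp only [mul_assoc]
          _ = (q * x * q) * (y * q) := by rw [hx]
          _ = (q * x) * (q * y * q) := by simp only [mul_assoc]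
          _ = (q * x) * (q * y) := by rw [hy]
          _ = (q * x * q) * y := by simp only [mul_assoc]
          _ = (q * x) * y := by rw [hx]
          _ = q * (x * y) := by rw [mul_assoc]
      one_mem' := by simp [hq]
      add_mem' := by
        intro x y hx hy
        simp only [Set.mem_setOf_eq] at hx hy ⊢
        rw [mul_add, add_mul, hx, hy]
      zero_mem' := by simp
      algebraMap_mem' := by
        intro r
        show q * algebraMap K A r * q = q * algebraMap K A r
        rw [← Algebra.commutes r q, mul_assoc, hq] } with hS
  -- the linear map V →ₗ[K] A
  set g : X ⊕ Unit → A := Sum.elim θ (fun _ => q) with hg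
  set f : FreeInvModule K X →ₗ[K] A := Finsupp.lift A K (X ⊕ Unit) g with hf
  have hgS : ∀ i, g i ∈ S := by
    rintro (j | u)
    · exact hθ j
    · show q * q * q = q * q
      simp only [hq]
  have hfS : ∀ v, f v ∈ S := by
    intro v
    rw [hf, Finsupp.lift_apply]
    exact Submodule.sum_mem S.toSubmodule fun i _ =>
      Submodule.smul_mem S.toSubmodule _ (hgS i)
  have hf1 : ∀ i, f (Finsupp.single i 1) = g i := by
    intro i
    rw [hf, Finsupp.lift_apply, Finsupp.sum_single_index (by simp), one_smul]
  set φ : TensorAlgebra K (FreeInvModule K X) →ₐ[K] A := TensorAlgebra.lift K f with hφ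
  have hφι : ∀ v, φ (TensorAlgebra.ι K v) = f v := fun v => TensorAlgebra.lift_ι_apply f v
  have hφq : φ (qTilde K X) = q := by rw [qTilde, hφι, hf1]; rfl
  have hφS : ∀ t, φ t ∈ S := by
    intro t
    induction t using TensorAlgebra.induction with
    | algebraMap r => rw [AlgHom.commutes]; exact S.algebraMap_mem r
    | ι v => rw [hφι]; exact hfS v
    | mul a b ha hb => rw [map_mul]; exact S.mul_mem ha hb
    | add a b ha hb => rw [map_add]; exact S.add_mem ha hb
  have hrel : ∀ ⦃x y⦄, InvRel K X x y → φ x = φ y := by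
    intro x y h
    cases h with
    | idem => rw [map_mul, hφq, hq]
    | inv a =>
      simp only [map_mul, hφq]
      exact hφS a
  set θh : FreeInvAlg K X →ₐ[K] A := RingQuot.liftAlgHom K ⟨φ, hrel⟩ with hθh
  have hθhmk : ∀ t, θh (RingQuot.mkAlgHom K (InvRel K X) t) = φ t := by
    intro t
    rw [hθh, RingQuot.liftAlgHom_mkAlgHom_apply]
  have hθhq : θh (qHat K X) = q := by rw [qHat, hθhmk, hφq]
  have hθhx : ∀ j, θh (xHat K X j) = θ j := by
    intro j
    rw [xHat, hθhmk, hφι, hf1]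
    rfl
  refine ⟨θh, ⟨hθhq, hθhx, ?_⟩, ?_⟩
  · intro a
    obtain ⟨t, rfl⟩ := RingQuot.mkAlgHom_surjective K (InvRel K X) a
    rw [hθhmk]
    exact hφS t
  · rintro ψ ⟨h1, h2, h3⟩
    refine RingQuot.ringQuot_ext' K ψ θh ?_
    apply TensorAlgebra.hom_ext
    apply Finsupp.lhom_ext'
    intro i
    apply LinearMap.ext_ring
    simp only [LinearMap.coe_comp, Function.comp_apply, Finsupp.lsingle_apply,
      AlgHom.toLinearMap_apply, AlgHom.coe_comp]
    cases i with
    | inl j =>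
      show ψ (RingQuot.mkAlgHom K (InvRel K X) (TensorAlgebra.ι K (Finsupp.single (Sum.inl j) 1)))
          = θh (RingQuot.mkAlgHom K (InvRel K X) (TensorAlgebra.ι K (Finsupp.single (Sum.inl j) 1)))
      rw [← xHat, h2 j]
      exact (hθhx j).symm
    | inr u =>
      show ψ (RingQuot.mkAlgHom K (InvRel K X) (TensorAlgebra.ι K (Finsupp.single (Sum.inr u) 1)))
          = θh (RingQuot.mkAlgHom K (InvRel K X) (TensorAlgebra.ι K (Finsupp.single (Sum.inr u) 1)))
      obtain rfl : u = () := rfl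
      rw [show (TensorAlgebra.ι K (Finsupp.single (Sum.inr ()) 1) :
          TensorAlgebra K (FreeInvModule K X)) = qTilde K X from rfl, ← qHat, h1]
      exact hθhq.symm
end
end

section
/- The set Ŝ consisting of 1̂, q̂, all monomials x̂_{j_1}⋯x̂_{j_m} (m ≥ 1), and all monomials x̂_{j_1}⋯x̂_{j_t} q̂ x̂_{j_{t+1}}⋯x̂_{j_m} (m ≥ 1, 0 ≤ t ≤ m) is a k-basis of the free invariant algebra Â = T(V)/I. -/
noncomputable section

/-- The monomial `x̂_{j_1} ⋯ x̂_{j_m}` associated with a list `[j_1, …, j_m]`. -/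
def hatMon (K : Type*) [Field K] (X : Type*) (l : List X) : FreeInvAlg K X :=
  (l.map (xHat K X)).prod

/-!
Modulo `q q = q` and `q a q = q a`, every occurrence of `q` after the first one in a word over
`X ∪ {q}` can be deleted, so the normal forms `l` and `l₁ q l₂` (`l, l₁, l₂` words over `X`) form
a monoid `M`. The relations of `I` hold in `K[M]`, while the normal forms multiply in `Â` as they
do in `M`; hence `Â ≅ K[M]` as `K`-algebras, and `Ŝ` is the image of the standard basis of `K[M]`.
-/

/-- `word l` stands for `l` and `withQ l₁ l₂` for `l₁ q l₂`. -/
inductive FreeInvMonoid (X : Type*)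
  | word : List X → FreeInvMonoid X
  | withQ : List X → List X → FreeInvMonoid X

namespace FreeInvMonoid

variable {X : Type*}

instance : Mul (FreeInvMonoid X) where
  mul
    | word u, word v => word (u ++ v)
    | word u, withQ v₁ v₂ => withQ (u ++ v₁) v₂
    | withQ u₁ u₂, word v => withQ u₁ (u₂ ++ v)
    | withQ u₁ u₂, withQ v₁ v₂ => withQ u₁ (u₂ ++ v₁ ++ v₂)

@[simp] theorem word_mul_word (u v : List X) : word u * word v = word (u ++ v) := rfl

@[simp] theorem word_mul_withQ (u v₁ v₂ : List X) : word u * withQ v₁ v₂ = withQ (u ++ v₁) v₂ :=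
  rfl

@[simp] theorem withQ_mul_word (u₁ u₂ v : List X) : withQ u₁ u₂ * word v = withQ u₁ (u₂ ++ v) :=
  rfl

@[simp] theorem withQ_mul_withQ (u₁ u₂ v₁ v₂ : List X) :
    withQ u₁ u₂ * withQ v₁ v₂ = withQ u₁ (u₂ ++ v₁ ++ v₂) :=
  rfl

instance : Monoid (FreeInvMonoid X) where
  one := word []
  mul_assoc a b c := by cases a <;> cases b <;> cases c <;> simp
  one_mul a := by cases a <;> rfl
  mul_one a := by
    show a * word [] = a
    cases a <;> simp

def q : FreeInvMonoid X := withQ [] []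

theorem q_mul_mul_q (m : FreeInvMonoid X) : q * m * q = q * m := by
  cases m <;> simp [q]

end FreeInvMonoid

theorem MonoidAlgebra.of_mul_mul_of {R M : Type*} [CommSemiring R] [Monoid M] {q : M}
    (hq : ∀ m, q * m * q = q * m) (b : MonoidAlgebra R M) :
    of R M q * b * of R M q = of R M q * b := by
  induction b using MonoidAlgebra.induction_linear with
  | zero => simp
  | add f g hf hg => simp only [mul_add, add_mul, hf, hg]
  | single m c => simp only [of_apply, single_mul_single, one_mul, mul_one, hq]

namespace FreeInvAlg

open FreeInvMonoid

variable (K : Type*) [Field K] (X : Type*)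

theorem hatMon_append (l l' : List X) : hatMon K X (l ++ l') = hatMon K X l * hatMon K X l' := by
  simp [hatMon]

theorem qHat_mul_mul_qHat (b : FreeInvAlg K X) : qHat K X * b * qHat K X = qHat K X * b := by
  obtain ⟨a, rfl⟩ := RingQuot.mkAlgHom_surjective K (InvRel K X) b
  rw [qHat, ← map_mul, ← map_mul]
  exact RingQuot.mkAlgHom_rel K (InvRel.inv a)

def ofFreeInvMonoid : FreeInvMonoid X →* FreeInvAlg K X where
  toFun
    | word l => hatMon K X l
    | withQ l₁ l₂ => hatMon K X l₁ * qHat K X * hatMon K X l₂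
  map_one' := by simp [hatMon]
  map_mul' a b := by
    cases a with
    | word u => cases b <;> simp [hatMon_append, mul_assoc]
    | withQ u₁ u₂ =>
      cases b with
      | word v => simp [hatMon_append, mul_assoc]
      | withQ v₁ v₂ =>
        calc hatMon K X u₁ * qHat K X * hatMon K X (u₂ ++ v₁ ++ v₂)
            = hatMon K X u₁ * (qHat K X * (hatMon K X u₂ * hatMon K X v₁)) * hatMon K X v₂ := by
              simp only [hatMon_append, mul_assoc]
          _ = hatMon K X u₁ * (qHat K X * (hatMon K X u₂ * hatMon K X v₁) * qHat K X) *
                hatMon K X v₂ := by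
              rw [qHat_mul_mul_qHat]
          _ = hatMon K X u₁ * qHat K X * hatMon K X u₂ *
                (hatMon K X v₁ * qHat K X * hatMon K X v₂) := by
              simp only [mul_assoc]

@[simp] theorem ofFreeInvMonoid_word (l : List X) : ofFreeInvMonoid K X (word l) = hatMon K X l :=
  rfl

@[simp] theorem ofFreeInvMonoid_withQ (l₁ l₂ : List X) :
    ofFreeInvMonoid K X (withQ l₁ l₂) = hatMon K X l₁ * qHat K X * hatMon K X l₂ :=
  rfl

def tensorAlgebraToMonoidAlgebra :
    TensorAlgebra K (FreeInvModule K X) →ₐ[K] MonoidAlgebra K (FreeInvMonoid X) :=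
  TensorAlgebra.lift K <| Finsupp.linearCombination K <|
    Sum.elim (fun j => MonoidAlgebra.of K _ (word [j])) fun _ => MonoidAlgebra.of K _ q

theorem tensorAlgebraToMonoidAlgebra_qTilde :
    tensorAlgebraToMonoidAlgebra K X (qTilde K X) = MonoidAlgebra.of K _ q := by
  simp [tensorAlgebraToMonoidAlgebra, qTilde]

theorem tensorAlgebraToMonoidAlgebra_rel ⦃a b : TensorAlgebra K (FreeInvModule K X)⦄
    (h : InvRel K X a b) :
    tensorAlgebraToMonoidAlgebra K X a = tensorAlgebraToMonoidAlgebra K X b := by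
  cases h with
  | idem =>
    rw [map_mul, tensorAlgebraToMonoidAlgebra_qTilde, ← map_mul]
    rfl
  | inv a =>
    simp only [map_mul, tensorAlgebraToMonoidAlgebra_qTilde]
    exact MonoidAlgebra.of_mul_mul_of q_mul_mul_q _

def toMonoidAlgebra : FreeInvAlg K X →ₐ[K] MonoidAlgebra K (FreeInvMonoid X) :=
  RingQuot.liftAlgHom K ⟨_, tensorAlgebraToMonoidAlgebra_rel K X⟩

theorem toMonoidAlgebra_xHat (j : X) :
    toMonoidAlgebra K X (xHat K X j) = MonoidAlgebra.of K _ (word [j]) := by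
  simp [toMonoidAlgebra, tensorAlgebraToMonoidAlgebra, xHat]

theorem toMonoidAlgebra_qHat : toMonoidAlgebra K X (qHat K X) = MonoidAlgebra.of K _ q := by
  rw [toMonoidAlgebra, qHat, RingQuot.liftAlgHom_mkAlgHom_apply]
  exact tensorAlgebraToMonoidAlgebra_qTilde K X

theorem toMonoidAlgebra_hatMon (l : List X) :
    toMonoidAlgebra K X (hatMon K X l) = MonoidAlgebra.of K _ (word l) := by
  induction l with
  | nil => exact (map_one _).trans (map_one (MonoidAlgebra.of K (FreeInvMonoid X))).symm
  | cons j l ih =>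
    rw [← List.singleton_append, hatMon_append, map_mul, ih, ← word_mul_word, map_mul,
      ← toMonoidAlgebra_xHat]
    simp [hatMon]

theorem toMonoidAlgebra_ofFreeInvMonoid (m : FreeInvMonoid X) :
    toMonoidAlgebra K X (ofFreeInvMonoid K X m) = MonoidAlgebra.of K _ m := by
  cases m with
  | word l => exact toMonoidAlgebra_hatMon K X l
  | withQ l₁ l₂ =>
    simp only [ofFreeInvMonoid_withQ, map_mul, toMonoidAlgebra_hatMon, toMonoidAlgebra_qHat]
    simp [q]

def equivMonoidAlgebra : FreeInvAlg K X ≃ₐ[K] MonoidAlgebra K (FreeInvMonoid X) :=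
  AlgEquiv.ofAlgHom (toMonoidAlgebra K X) (MonoidAlgebra.lift K _ _ (ofFreeInvMonoid K X))
    (by
      ext m : 1
      · simpa using toMonoidAlgebra_ofFreeInvMonoid K X m
      · exact Subsingleton.elim _ _)
    (by
      refine RingQuot.ringQuot_ext' K _ _ (TensorAlgebra.hom_ext (Finsupp.lhom_ext' fun s => ?_))
      ext
      rcases s with j | ⟨⟩
      · change MonoidAlgebra.lift K _ _ _ (toMonoidAlgebra K X (xHat K X j)) = xHat K X j
        simp [toMonoidAlgebra_xHat, hatMon]
      · change MonoidAlgebra.lift K _ _ _ (toMonoidAlgebra K X (qHat K X)) = qHat K X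
        simp [toMonoidAlgebra_qHat, q, hatMon])

def basis : Module.Basis (FreeInvMonoid X) K (FreeInvAlg K X) :=
  (MonoidAlgebra.basis _ K).map (equivMonoidAlgebra K X).symm.toLinearEquiv

theorem basis_apply (m : FreeInvMonoid X) : basis K X m = ofFreeInvMonoid K X m := by
  simp [basis, equivMonoidAlgebra]

theorem range_basis : Set.range (basis K X) =
    {a | ∃ l : List X, a = hatMon K X l} ∪
      {a | ∃ l₁ l₂ : List X, a = hatMon K X l₁ * qHat K X * hatMon K X l₂} := by
  ext a
  simp only [Set.mem_range, basis_apply, Set.mem_union, Set.mem_ofPred_eq]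
  constructor
  · rintro ⟨⟨l⟩ | ⟨l₁, l₂⟩, rfl⟩
    exacts [Or.inl ⟨l, rfl⟩, Or.inr ⟨l₁, l₂, rfl⟩]
  · rintro (⟨l, rfl⟩ | ⟨l₁, l₂, rfl⟩)
    exacts [⟨word l, rfl⟩, ⟨withQ l₁ l₂, rfl⟩]

end FreeInvAlg

/-- The set `Ŝ` consisting of `1̂`, `q̂`, all monomials `x̂_{j_1}⋯x̂_{j_m}` (`m ≥ 1`) and all
monomials `x̂_{j_1}⋯x̂_{j_t} q̂ x̂_{j_{t+1}}⋯x̂_{j_m}` (`m ≥ 1`, `0 ≤ t ≤ m`) is a `K`-basis of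
the free invariant algebra `Â = T(V)/I`.  (The empty monomial is `1̂`, and the middle family
with both lists empty gives `q̂`.) -/
theorem freeInvAlg_basis (K : Type*) [Field K] (X : Type*) :
    let Shat : Set (FreeInvAlg K X) :=
      {a | ∃ l : List X, a = hatMon K X l} ∪
      {a | ∃ l₁ l₂ : List X, a = hatMon K X l₁ * qHat K X * hatMon K X l₂}
    LinearIndependent K ((↑) : Shat → FreeInvAlg K X) ∧
    Submodule.span K Shat = ⊤ := by
  intro Shat
  rw [show Shat = Set.range (FreeInvAlg.basis K X) from (FreeInvAlg.range_basis K X).symm]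
  exact ⟨(linearIndepOn_id_range_iff (FreeInvAlg.basis K X).injective).mpr
    (FreeInvAlg.basis K X).linearIndependent,
    (FreeInvAlg.basis K X).span_eq⟩
end
end

section
/- The pair ((U, q̄), i), where U := Â/R, q̄ := q̂ + R and i(x) := x̂ + R, is an enveloping^{6-th} algebra of the Lie algebra L: (i) i is a Lie algebra homomorphism from L to the Lie algebra (U,q̄) with bracket [a,b]_{6,k} = ab − ba − abq̄ + baq̄ + kaq̄b − kbq̄a, and (ii) for any invariant algebra (A,q) and any Lie algebra homomorphism f : L → Lie((A,q),[·,·]_{6,k}) there exists a unique invariant homomorphism f' : (U,q̄) → (A,q) with f = f' ∘ i. -/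
noncomputable section

variable (K : Type*) [Field K]

/-- The linear embedding `L → Â` extending `î` on the basis `X = {x_j}`. -/
def lHat (J : Type*) (L : Type*) [AddCommGroup L] [Module K L] (b : Module.Basis J K L) :
    L →ₗ[K] FreeInvAlg K J :=
  (RingQuot.mkAlgHom K (InvRel K J)).toLinearMap ∘ₗ
    (TensorAlgebra.ι K (M := FreeInvModule K J)) ∘ₗ
      (Finsupp.lmapDomain K K Sum.inl) ∘ₗ b.repr.toLinearMap

/-- The relations generating the ideal `R`:
`[x,y]^ = x̂ŷ - ŷx̂ - x̂ŷq̂ + ŷx̂q̂ + k x̂q̂ŷ - k ŷq̂x̂` for all `x, y ∈ L`. -/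
inductive LieRel (J : Type*) (L : Type*) [LieRing L] [LieAlgebra K L]
    (b : Module.Basis J K L) (c : K) : FreeInvAlg K J → FreeInvAlg K J → Prop
  | rel (x y : L) : LieRel J L b c (lHat K J L b ⁅x, y⁆)
      (lHat K J L b x * lHat K J L b y - lHat K J L b y * lHat K J L b x
        - lHat K J L b x * lHat K J L b y * qHat K J
        + lHat K J L b y * lHat K J L b x * qHat K J
        + c • (lHat K J L b x * qHat K J * lHat K J L b y)
        - c • (lHat K J L b y * qHat K J * lHat K J L b x))

/-- The enveloping⁶ᵗʰ algebra `U = Â/R`. -/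
abbrev EnvLie (J : Type*) (L : Type*) [LieRing L] [LieAlgebra K L]
    (b : Module.Basis J K L) (c : K) : Type _ := RingQuot (LieRel K J L b c)

/-- `q̄ = q̂ + R`. -/
def qBar (J : Type*) (L : Type*) [LieRing L] [LieAlgebra K L]
    (b : Module.Basis J K L) (c : K) : EnvLie K J L b c :=
  RingQuot.mkAlgHom K (LieRel K J L b c) (qHat K J)

/-- The canonical linear map `i : L → U`, `i(x) = x̂ + R`. -/
def iEnv (J : Type*) (L : Type*) [LieRing L] [LieAlgebra K L]
    (b : Module.Basis J K L) (c : K) : L →ₗ[K] EnvLie K J L b c :=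
  (RingQuot.mkAlgHom K (LieRel K J L b c)).toLinearMap ∘ₗ lHat K J L b

/-! Part (i) is the image in `U` of the relations defining `R`. For (ii): in any algebra with
an idempotent `q`, the elements `a` with `q a q = q a` form a subalgebra containing `q`, and in
it the relations of `Â` hold. So a map sending the generators `x_j` into it extends to `Â`; if it
comes from a Lie homomorphism `f`, the extension kills `R` and descends to `U`. Uniqueness holds
because `U` is generated by `q̄` and the `i(x_j)`. -/

section Invariance

variable {A : Type*} [Ring A] [Algebra K A] {q : A}

def invariantSubalgebra (hq : q * q = q) : Subalgebra K A where
  carrier := {a | q * a * q = q * a}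
  mul_mem' {a a'} (ha : q * a * q = q * a) (ha' : q * a' * q = q * a') := by
    show q * (a * a') * q = q * (a * a')
    calc q * (a * a') * q = q * a * a' * q := by simp only [mul_assoc]
      _ = q * a * q * a' * q := by rw [ha]
      _ = q * a * (q * a' * q) := by simp only [mul_assoc]
      _ = q * a * q * a' := by rw [ha']; simp only [mul_assoc]
      _ = q * (a * a') := by rw [ha, mul_assoc]
  add_mem' {a a'} (ha : q * a * q = q * a) (ha' : q * a' * q = q * a') := by
    show q * (a + a') * q = q * (a + a')
    rw [mul_add, add_mul, ha, ha']
  algebraMap_mem' r := by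
    show q * algebraMap K A r * q = q * algebraMap K A r
    rw [← Algebra.commutes, mul_assoc, hq]

lemma idempotent_mem_invariantSubalgebra (hq : q * q = q) : q ∈ invariantSubalgebra K hq := by
  show q * q * q = q * q
  rw [hq, hq]

end Invariance

namespace FreeInvAlg

variable (X : Type*)

def ι (x : X) : FreeInvAlg K X :=
  RingQuot.mkAlgHom K (InvRel K X) (TensorAlgebra.ι K (Finsupp.single (Sum.inl x) 1))

variable {K X}

lemma hom_ext {A : Type*} [Semiring A] [Algebra K A] {F G : FreeInvAlg K X →ₐ[K] A}
    (hq : F (qHat K X) = G (qHat K X)) (hι : ∀ x, F (ι K X x) = G (ι K X x)) : F = G := by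
  apply RingQuot.ringQuot_ext'
  ext (x | u)
  · exact hι x
  · exact hq

variable {A : Type*} [Ring A] [Algebra K A] {q : A}

def lift (hq : q * q = q) (g : X → A) (hg : ∀ x, q * g x * q = q * g x) :
    FreeInvAlg K X →ₐ[K] A :=
  let S := invariantSubalgebra K hq
  let gens : X ⊕ Unit → S := Sum.elim (fun x => ⟨g x, hg x⟩)
    fun _ => ⟨q, idempotent_mem_invariantSubalgebra K hq⟩
  let φ : TensorAlgebra K (FreeInvModule K X) →ₐ[K] S :=
    TensorAlgebra.lift K (Finsupp.linearCombination K gens)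
  have hφq : φ (qTilde K X) = gens (Sum.inr ()) := by simp [φ, qTilde]
  S.val.comp <| RingQuot.liftAlgHom K ⟨φ, by
    rintro _ _ (_ | a) <;> simp only [map_mul, hφq] <;> apply Subtype.ext
    · exact hq
    · exact (φ a).2⟩

@[simp]
lemma lift_qHat (hq : q * q = q) (g : X → A) (hg : ∀ x, q * g x * q = q * g x) :
    lift hq g hg (qHat K X) = q := by
  simp [lift, qHat, qTilde]

@[simp]
lemma lift_ι (hq : q * q = q) (g : X → A) (hg : ∀ x, q * g x * q = q * g x) (x : X) :
    lift hq g hg (ι K X x) = g x := by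
  simp [lift, ι]

end FreeInvAlg

section EnvLie

variable {K} {J L : Type*} [LieRing L] [LieAlgebra K L] (b : Module.Basis J K L) (c : K)

lemma lHat_basis (j : J) : lHat K J L b (b j) = FreeInvAlg.ι K J j := by
  simp [lHat, FreeInvAlg.ι]

lemma iEnv_lie (x y : L) :
    iEnv K J L b c ⁅x, y⁆ =
      iEnv K J L b c x * iEnv K J L b c y - iEnv K J L b c y * iEnv K J L b c x
        - iEnv K J L b c x * iEnv K J L b c y * qBar K J L b c
        + iEnv K J L b c y * iEnv K J L b c x * qBar K J L b c
        + c • (iEnv K J L b c x * qBar K J L b c * iEnv K J L b c y)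
        - c • (iEnv K J L b c y * qBar K J L b c * iEnv K J L b c x) := by
  simpa [iEnv, qBar] using RingQuot.mkAlgHom_rel K (LieRel.rel (b := b) (c := c) x y)

lemma EnvLie.hom_ext {A : Type*} [Semiring A] [Algebra K A] {F G : EnvLie K J L b c →ₐ[K] A}
    (hq : F (qBar K J L b c) = G (qBar K J L b c))
    (hi : ∀ x, F (iEnv K J L b c x) = G (iEnv K J L b c x)) : F = G := by
  apply RingQuot.ringQuot_ext'
  apply FreeInvAlg.hom_ext
  · exact hq
  · intro j
    simpa [iEnv, lHat_basis] using hi (b j)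

variable {A : Type*} [Ring A] [Algebra K A] {q : A}

lemma FreeInvAlg.lift_lHat (hq : q * q = q) (f : L →ₗ[K] A)
    (hf : ∀ x, q * f x * q = q * f x) (x : L) :
    FreeInvAlg.lift hq (fun j => f (b j)) (fun j => hf (b j)) (lHat K J L b x) = f x := by
  have : (FreeInvAlg.lift hq (fun j => f (b j)) (fun j => hf (b j))).toLinearMap ∘ₗ lHat K J L b
      = f := b.ext fun j => by simp [lHat_basis]
  exact LinearMap.congr_fun this x

variable (hq : q * q = q) (f : L →ₗ[K] A) (hf : ∀ x, q * f x * q = q * f x)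
  (hbr : ∀ x y : L, f ⁅x, y⁆ = f x * f y - f y * f x - f x * f y * q + f y * f x * q
    + c • (f x * q * f y) - c • (f y * q * f x))

def EnvLie.lift : EnvLie K J L b c →ₐ[K] A :=
  RingQuot.liftAlgHom K ⟨FreeInvAlg.lift hq (fun j => f (b j)) (fun j => hf (b j)), by
    rintro _ _ ⟨x, y⟩
    simpa [FreeInvAlg.lift_lHat] using hbr x y⟩

lemma EnvLie.lift_qBar : EnvLie.lift b c hq f hf hbr (qBar K J L b c) = q := by
  simp [EnvLie.lift, qBar]

lemma EnvLie.lift_iEnv (x : L) : EnvLie.lift b c hq f hf hbr (iEnv K J L b c x) = f x := by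
  simp only [EnvLie.lift, iEnv, LinearMap.comp_apply, AlgHom.toLinearMap_apply,
    RingQuot.liftAlgHom_mkAlgHom_apply]
  exact FreeInvAlg.lift_lHat b hq f hf x

end EnvLie

theorem envLie_is_enveloping (J : Type*) (L : Type*) [LieRing L] [LieAlgebra K L]
    (b : Module.Basis J K L) (c : K) :
    -- (i)
    (∀ x y : L,
      iEnv K J L b c ⁅x, y⁆ =
        iEnv K J L b c x * iEnv K J L b c y - iEnv K J L b c y * iEnv K J L b c x
          - iEnv K J L b c x * iEnv K J L b c y * qBar K J L b c
          + iEnv K J L b c y * iEnv K J L b c x * qBar K J L b c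
          + c • (iEnv K J L b c x * qBar K J L b c * iEnv K J L b c y)
          - c • (iEnv K J L b c y * qBar K J L b c * iEnv K J L b c x)) ∧
    -- (ii)
    (∀ (A : Type*) [Ring A] [Algebra K A] (q : A), q * q = q →
      ∀ f : L →ₗ[K] A, (∀ x : L, q * f x * q = q * f x) →
      (∀ x y : L,
        f ⁅x, y⁆ = f x * f y - f y * f x - f x * f y * q + f y * f x * q
          + c • (f x * q * f y) - c • (f y * q * f x)) →
      ∃! f' : EnvLie K J L b c →ₐ[K] A,
        (f' (qBar K J L b c) = q) ∧ (∀ x : L, f' (iEnv K J L b c x) = f x)) := by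
  refine ⟨iEnv_lie b c, fun A _ _ q hq f hf hbr => ?_⟩
  refine ⟨EnvLie.lift b c hq f hf hbr, 
    ⟨EnvLie.lift_qBar b c hq f hf hbr, EnvLie.lift_iEnv b c hq f hf hbr⟩, ?_⟩
  rintro F ⟨hFq, hFi⟩
  apply EnvLie.hom_ext b c
  · rw [hFq, EnvLie.lift_qBar]
  · intro x
    rw [hFi, EnvLie.lift_iEnv]
end
end

section
/- The map σ : U → U defined by σ(a) := a + qa − aq satisfies σ(1) = 1, σ(q) = q, and is an algebra homomorphism on the enveloping^{⟨4-th⟩} algebra U, i.e., σ(ab) = σ(a)σ(b) for all a, b ∈ U. -/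
noncomputable section

variable (K : Type*) [Field K]

/-- The relations generating the ideal `R` for a right Leibniz algebra `(L, ⟨·,·⟩)`:
`⟨x,y⟩^ = x̂ŷ - ŷx̂ + ŷq̂x̂ - x̂ŷq̂ + k x̂q̂ŷ - k q̂ŷx̂` for all `x, y ∈ L`. -/
inductive LeibRel (J : Type*) (L : Type*) [AddCommGroup L] [Module K L]
    (br : L →ₗ[K] L →ₗ[K] L) (b : Module.Basis J K L) (c : K) :
    FreeInvAlg K J → FreeInvAlg K J → Prop
  | rel (x y : L) : LeibRel J L br b c (lHat K J L b (br x y))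
      (lHat K J L b x * lHat K J L b y - lHat K J L b y * lHat K J L b x
        + lHat K J L b y * qHat K J * lHat K J L b x
        - lHat K J L b x * lHat K J L b y * qHat K J
        + c • (lHat K J L b x * qHat K J * lHat K J L b y)
        - c • (qHat K J * lHat K J L b y * lHat K J L b x))

/-- The enveloping^⟨4-th⟩ algebra `U = Â/R` of a Leibniz algebra. -/
abbrev EnvLeib (J : Type*) (L : Type*) [AddCommGroup L] [Module K L]
    (br : L →ₗ[K] L →ₗ[K] L) (b : Module.Basis J K L) (c : K) : Type _ :=
  RingQuot (LeibRel K J L br b c)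

/-- `q̄ = q̂ + R`. -/
def qBarLeib (J : Type*) (L : Type*) [AddCommGroup L] [Module K L]
    (br : L →ₗ[K] L →ₗ[K] L) (b : Module.Basis J K L) (c : K) : EnvLeib K J L br b c :=
  RingQuot.mkAlgHom K (LeibRel K J L br b c) (qHat K J)

/-- The canonical linear map `i : L → U`, `i(x) = x̂ + R`. -/
def iLeib (J : Type*) (L : Type*) [AddCommGroup L] [Module K L]
    (br : L →ₗ[K] L →ₗ[K] L) (b : Module.Basis J K L) (c : K) : L →ₗ[K] EnvLeib K J L br b c :=
  (RingQuot.mkAlgHom K (LeibRel K J L br b c)).toLinearMap ∘ₗ lHat K J L b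

section Twist

variable {R : Type*} [Ring R]

/-- For `q` with `q x q = q x` for all `x` (so `q` is idempotent), `a ↦ a + q a - a q` is
multiplicative: in the expansion of `(a + q a - a q) (b + q b - b q)` the four terms containing
`q` twice collapse to `q a b` or `a q b`, and these cancel against the rest. -/
def twistHom (q : R) (hq : ∀ x, q * x * q = q * x) : R →+* R where
  toFun a := a + q * a - a * q
  map_one' := by simp
  map_zero' := by simp
  map_add' a b := by noncomm_ring
  map_mul' a b := by
    have hqq : q * q = q := by simpa using hq 1
    have h₁ : q * (a * (q * b)) = q * (a * b) := by rw [← mul_assoc, ← mul_assoc, hq, mul_assoc]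
    have h₂ : a * (q * (q * b)) = a * (q * b) := by rw [← mul_assoc q q, hqq]
    have h₃ : a * (q * (b * q)) = a * (q * b) := by rw [← mul_assoc q b, hq]
    have h₄ : q * (a * (b * q)) = q * (a * b) := by rw [← mul_assoc a b, ← mul_assoc, hq]
    simp only [add_mul, sub_mul, mul_add, mul_sub, mul_assoc, h₁, h₂, h₃, h₄]
    abel

end Twist

lemma qHat_mul_mul_qHat (J : Type*) (x : FreeInvAlg K J) :
    qHat K J * x * qHat K J = qHat K J * x := by
  obtain ⟨t, rfl⟩ := RingQuot.mkAlgHom_surjective K (InvRel K J) x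
  simp only [qHat, ← map_mul]
  exact RingQuot.mkAlgHom_rel K (InvRel.inv t)

lemma qBarLeib_mul_mul_qBarLeib (J : Type*) (L : Type*) [AddCommGroup L] [Module K L]
    (br : L →ₗ[K] L →ₗ[K] L) (b : Module.Basis J K L) (c : K) (a : EnvLeib K J L br b c) :
    qBarLeib K J L br b c * a * qBarLeib K J L br b c = qBarLeib K J L br b c * a := by
  obtain ⟨t, rfl⟩ := RingQuot.mkAlgHom_surjective K (LeibRel K J L br b c) a
  simp only [qBarLeib, ← map_mul, qHat_mul_mul_qHat]

theorem envLeib_sigma_algHom (J : Type*) (L : Type*) [AddCommGroup L] [Module K L]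
    (br : L →ₗ[K] L →ₗ[K] L)
    (b : Module.Basis J K L) (c : K) :
    let q : EnvLeib K J L br b c := qBarLeib K J L br b c
    let σ : EnvLeib K J L br b c → EnvLeib K J L br b c := fun a => a + q * a - a * q
    (σ 1 = 1) ∧ (σ q = q) ∧ (∀ a b' : EnvLeib K J L br b c, σ (a * b') = σ a * σ b') := by
  intro q σ
  let τ := twistHom q (qBarLeib_mul_mul_qBarLeib K J L br b c)
  exact ⟨τ.map_one, add_sub_cancel_right q (q * q), τ.map_mul⟩
end
end
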